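/- arXiv:1806.08142 — 2 statements merged into one kernel-verified Lean document; each statement's English description precedes it below -/
import Mathlib

section
/- Let π₁ and π₂ be Poisson tensors on ℝ^N satisfying, for all x, y ∈ ℝ^N and all indices i, j, k: (i) ∑_{s=1}^N ( π_{2,sk}(x) (∂π_{1,ij}/∂y_s)(y) + π_{2,sj}(x) (∂π_{1,ki}/∂y_s)(y) + π_{2,si}(x) (∂π_{1,jk}/∂y_s)(y) ) = 0; (ii) ∑_{s=1}^N ( (∑_{m=1}^N y_m (∂π_{2,sk}/∂x_m)(x)) (∂π_{1,ij}/∂y_s)(y) + π_{1,si}(y) (∂π_{2,jk}/∂x_s)(x) + π_{1,sj}(y) (∂π_{2,ki}/∂x_s)(x) ) = 0; and (iii) ∑_{s,m=1}^N y_s π_{1,mk}(y) (∂²π_{2,ij}/∂x_m ∂x_s)(x) = 0, where ∂π₁/∂y_s denotes the partial derivative of π₁ in its s-th argument evaluated at y. Then the 2N×2N matrix field on ℝ^{2N} with blocks Π^{xx}(x,y) = π₁(y), Π^{xy}(x,y) = π₂(x), Π^{yx}(x,y) = π₂(x), Π^{yy}(x,y) = ∑_{s=1}^N (∂π₂/∂x_s)(x)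 y_s is a Poisson tensor on ℝ^{2N} (denoted π₁ ⋉₁ π₂). -/
open scoped ContDiff

/-- Partial derivative `∂f/∂z_s` at `z`, for functions on `ℝ^ι`. -/
noncomputable def pd {ι : Type} [Fintype ι] [DecidableEq ι]
    (s : ι) (f : (ι → ℝ) → ℝ) (x : ι → ℝ) : ℝ :=
  fderiv ℝ f x (Pi.single s 1)

/-- A Poisson tensor on `ℝ^ι`: a smooth antisymmetric matrix field satisfying the
Jacobi condition. -/
def IsPoissonTensor {ι : Type} [Fintype ι] [DecidableEq ι]
    (π : (ι → ℝ) → Matrix ι ι ℝ) : Prop :=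
  (∀ i j, ContDiff ℝ ∞ fun x => π x i j) ∧
  (∀ x i j, π x j i = - π x i j) ∧
  (∀ x i j k, ∑ s, (pd s (fun y => π y i j) x * π x s k
      + pd s (fun y => π y k i) x * π x s j
      + pd s (fun y => π y j k) x * π x s i) = 0)

/-- `c` is a (smooth) Casimir function for `π`. -/
def IsCasimir {ι : Type} [Fintype ι] [DecidableEq ι]
    (π : (ι → ℝ) → Matrix ι ι ℝ) (c : (ι → ℝ) → ℝ) : Prop :=
  ContDiff ℝ ∞ c ∧ ∀ x j, ∑ s, pd s c x * π x s j = 0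

/-- The matrix of partial derivatives `(∂π_{ij}/∂x_s)(x)`. -/
noncomputable def pdMat {N : ℕ} (s : Fin N)
    (π : (Fin N → ℝ) → Matrix (Fin N) (Fin N) ℝ) (x : Fin N → ℝ) :
    Matrix (Fin N) (Fin N) ℝ :=
  Matrix.of fun i j => pd s (fun y => π y i j) x

/-- The `x`-part of a point `z = (x,y) ∈ ℝ^{2N}`. -/
def Xc {N : ℕ} (z : (Fin N ⊕ Fin N) → ℝ) : Fin N → ℝ := fun i => z (Sum.inl i)

/-- The `y`-part of a point `z = (x,y) ∈ ℝ^{2N}`. -/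
def Yc {N : ℕ} (z : (Fin N ⊕ Fin N) → ℝ) : Fin N → ℝ := fun i => z (Sum.inr i)

/-!
The Jacobiator of `π₁ ⋉₁ π₂` at a triple of indices of `ℝ^{2N}` depends, up to cyclic rotation,
only on how many of the indices are `y`-indices, since the `xx`-block depends only on `y`, the
off-diagonal blocks only on `x`, and the `yy`-block is linear in `y`. With no `y`-index it is
condition (i), with one it is condition (ii), with two it is the Jacobi identity of `π₂` plus
condition (iii), and with three it is the derivative of the Jacobi identity of `π₂` in the
direction `y`.
-/

section PartialDerivative

variable {ι : Type} [Fintype ι] [DecidableEq ι]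

lemma pd_neg (s : ι) (f : (ι → ℝ) → ℝ) (x : ι → ℝ) :
    pd s (fun x => -f x) x = -pd s f x := by
  simp [pd]

lemma pd_add {f g : (ι → ℝ) → ℝ} {x : ι → ℝ} (hf : DifferentiableAt ℝ f x)
    (hg : DifferentiableAt ℝ g x) (s : ι) :
    pd s (fun x => f x + g x) x = pd s f x + pd s g x := by
  simp [pd, fderiv_fun_add hf hg]

lemma pd_mul {f g : (ι → ℝ) → ℝ} {x : ι → ℝ} (hf : DifferentiableAt ℝ f x)
    (hg : DifferentiableAt ℝ g x) (s : ι) :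
    pd s (fun x => f x * g x) x = pd s f x * g x + f x * pd s g x := by
  simp [pd, fderiv_fun_mul hf hg]
  ring

lemma pd_sum {α : Type*} {u : Finset α} {f : α → (ι → ℝ) → ℝ} {x : ι → ℝ}
    (hf : ∀ a ∈ u, DifferentiableAt ℝ (f a) x) (s : ι) :
    pd s (fun x => ∑ a ∈ u, f a x) x = ∑ a ∈ u, pd s (f a) x := by
  simp [pd, fderiv_fun_sum hf]

lemma pd_apply (s i : ι) (x : ι → ℝ) : pd s (fun x => x i) x = (Pi.single s 1 : ι → ℝ) i := by
  simp [pd, (hasFDerivAt_apply i x).fderiv]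

lemma ContDiff.contDiff_pd {m n : WithTop ℕ∞}
    {f : (ι → ℝ) → ℝ} (hf : ContDiff ℝ n f) (hmn : m + 1 ≤ n) (s : ι) :
    ContDiff ℝ m fun x => pd s f x :=
  (hf.fderiv_right hmn).clm_apply contDiff_const

lemma ContDiff.differentiable_pd {f : (ι → ℝ) → ℝ}
    (hf : ContDiff ℝ 2 f) (s : ι) : Differentiable ℝ fun x => pd s f x :=
  (hf.contDiff_pd (m := 1) (by norm_num) s).differentiable one_ne_zero

lemma pd_comm {f : (ι → ℝ) → ℝ} (hf : ContDiff ℝ 2 f) (s m : ι) (x : ι → ℝ) :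
    pd m (fun x => pd s f x) x = pd s (fun x => pd m f x) x := by
  have hdf : DifferentiableAt ℝ (fderiv ℝ f) x :=
    (hf.fderiv_right (m := 1) (by norm_num)).differentiable one_ne_zero |>.differentiableAt
  have hsnd (v w : ι → ℝ) :
      fderiv ℝ (fun x => fderiv ℝ f x v) x w = fderiv ℝ (fderiv ℝ f) x w v := by
    simp [fderiv_clm_apply hdf (differentiableAt_const v)]
  simp only [pd, hsnd]
  exact hf.contDiffAt.isSymmSndFDerivAt (by simp) _ _

lemma pd_comp_reindex {κ : Type} [Fintype κ] (σ : κ → ι) {f : (κ → ℝ) → ℝ} {z : ι → ℝ}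
    (hf : DifferentiableAt ℝ f fun k => z (σ k)) (s : ι) :
    pd s (fun z => f fun k => z (σ k)) z
      = fderiv ℝ f (fun k => z (σ k)) fun k => (Pi.single s 1 : ι → ℝ) (σ k) := by
  let L : (ι → ℝ) →L[ℝ] (κ → ℝ) := .pi fun k => .proj (σ k)
  change fderiv ℝ (f ∘ L) z _ = _
  rw [fderiv_comp z hf L.differentiableAt, L.fderiv]
  rfl

end PartialDerivative

section Coordinates

variable {N : ℕ} {f : (Fin N → ℝ) → ℝ} {z : (Fin N ⊕ Fin N) → ℝ}

lemma pd_inl_comp_Xc (hf : DifferentiableAt ℝ f (Xc z)) (t : Fin N) :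
    pd (Sum.inl t) (fun z => f (Xc z)) z = pd t f (Xc z) := by
  refine (pd_comp_reindex Sum.inl hf _).trans ?_
  congr 1
  ext k
  simp [Pi.single_apply]

lemma pd_inr_comp_Xc (hf : DifferentiableAt ℝ f (Xc z)) (t : Fin N) :
    pd (Sum.inr t) (fun z => f (Xc z)) z = 0 := by
  refine (pd_comp_reindex Sum.inl hf _).trans ?_
  simp only [ne_eq, reduceCtorEq, not_false_eq_true, Pi.single_eq_of_ne]
  exact map_zero _

lemma pd_inl_comp_Yc (hf : DifferentiableAt ℝ f (Yc z)) (t : Fin N) :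
    pd (Sum.inl t) (fun z => f (Yc z)) z = 0 := by
  refine (pd_comp_reindex Sum.inr hf _).trans ?_
  simp only [ne_eq, reduceCtorEq, not_false_eq_true, Pi.single_eq_of_ne]
  exact map_zero _

lemma pd_inr_comp_Yc (hf : DifferentiableAt ℝ f (Yc z)) (t : Fin N) :
    pd (Sum.inr t) (fun z => f (Yc z)) z = pd t f (Yc z) := by
  refine (pd_comp_reindex Sum.inr hf _).trans ?_
  congr 1
  ext k
  simp [Pi.single_apply]

lemma ContDiff.comp_Xc {n : WithTop ℕ∞} (hf : ContDiff ℝ n f) :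
    ContDiff ℝ n fun z : (Fin N ⊕ Fin N) → ℝ => f (Xc z) := by
  unfold Xc; fun_prop

lemma ContDiff.comp_Yc {n : WithTop ℕ∞} (hf : ContDiff ℝ n f) :
    ContDiff ℝ n fun z : (Fin N ⊕ Fin N) → ℝ => f (Yc z) := by
  unfold Yc; fun_prop

variable {G : Fin N → (Fin N → ℝ) → ℝ}

lemma pd_sum_Yc_mul_comp_Xc (hG : ∀ m, DifferentiableAt ℝ (G m) (Xc z)) (t : Fin N ⊕ Fin N) :
    pd t (fun z => ∑ m, Yc z m * G m (Xc z)) z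
      = ∑ m, ((Pi.single t 1 : (Fin N ⊕ Fin N) → ℝ) (.inr m) * G m (Xc z)
        + Yc z m * pd t (fun z => G m (Xc z)) z) := by
  have hY (m : Fin N) : DifferentiableAt ℝ (fun z : (Fin N ⊕ Fin N) → ℝ => Yc z m) z := by
    unfold Yc; fun_prop
  have hX (m : Fin N) : DifferentiableAt ℝ (fun z => G m (Xc z)) z :=
    (hG m).comp z (by unfold Xc; fun_prop)
  have hYd (m : Fin N) : pd t (fun z => Yc z m) z = (Pi.single t 1 : _ → ℝ) (.inr m) :=
    pd_apply t (.inr m) z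
  rw [pd_sum fun m _ => (hY m).fun_mul (hX m)]
  simp only [pd_mul (hY _) (hX _), hYd]

lemma pd_inl_sum_Yc_mul_comp_Xc (hG : ∀ m, DifferentiableAt ℝ (G m) (Xc z)) (t : Fin N) :
    pd (.inl t) (fun z => ∑ m, Yc z m * G m (Xc z)) z = ∑ m, Yc z m * pd t (G m) (Xc z) := by
  simp [pd_sum_Yc_mul_comp_Xc hG, pd_inl_comp_Xc (hG _)]

lemma pd_inr_sum_Yc_mul_comp_Xc (hG : ∀ m, DifferentiableAt ℝ (G m) (Xc z)) (t : Fin N) :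
    pd (.inr t) (fun z => ∑ m, Yc z m * G m (Xc z)) z = G t (Xc z) := by
  simp [pd_sum_Yc_mul_comp_Xc hG, pd_inr_comp_Xc (hG _), Pi.single_apply]

end Coordinates

section Jacobiator

variable {ι : Type} [Fintype ι] [DecidableEq ι]

noncomputable def jacobiator (π : (ι → ℝ) → Matrix ι ι ℝ) (x : ι → ℝ) (i j k : ι) : ℝ :=
  ∑ s, (pd s (fun y => π y i j) x * π x s k
    + pd s (fun y => π y k i) x * π x s j
    + pd s (fun y => π y j k) x * π x s i)

lemma jacobiator_rotate (π : (ι → ℝ) → Matrix ι ι ℝ) (x : ι → ℝ) (i j k : ι) :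
    jacobiator π x i j k = jacobiator π x k i j :=
  Finset.sum_congr rfl fun _ _ => by ring

lemma pd_jacobiator {π : (ι → ℝ) → Matrix ι ι ℝ} (hπ : ∀ i j, ContDiff ℝ 2 fun x => π x i j)
    (m : ι) (x : ι → ℝ) (i j k : ι) :
    pd m (fun x => jacobiator π x i j k) x
      = ∑ s, ((pd s (fun x => pd m (fun y => π y i j) x) x * π x s k
          + pd s (fun y => π y i j) x * pd m (fun y => π y s k) x)
        + (pd s (fun x => pd m (fun y => π y k i) x) x * π x s j
          + pd s (fun y => π y k i) x * pd m (fun y => π y s j) x)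
        + (pd s (fun x => pd m (fun y => π y j k) x) x * π x s i
          + pd s (fun y => π y j k) x * pd m (fun y => π y s i) x)) := by
  have hd (i j : ι) : DifferentiableAt ℝ (fun x => π x i j) x :=
    ((hπ i j).differentiable two_ne_zero).differentiableAt
  have hpd (s i j : ι) : DifferentiableAt ℝ (fun x => pd s (fun y => π y i j) x) x :=
    ((hπ i j).differentiable_pd s).differentiableAt
  have hterm (s i j k : ι) := (hpd s i j).fun_mul (hd s k)
  unfold jacobiator
  rw [pd_sum fun s _ => ((hterm s i j k).fun_add (hterm s k i j)).fun_add (hterm s j k i)]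
  refine Finset.sum_congr rfl fun s _ => ?_
  rw [pd_add ((hterm s i j k).fun_add (hterm s k i j)) (hterm s j k i),
    pd_add (hterm s i j k) (hterm s k i j), pd_mul (hpd s i j) (hd s k),
    pd_mul (hpd s k i) (hd s j), pd_mul (hpd s j k) (hd s i),
    pd_comm (hπ i j), pd_comm (hπ k i), pd_comm (hπ j k)]

end Jacobiator

section SemidirectTensor

variable {N : ℕ}

noncomputable def semidirectTensor (π₁ π₂ : (Fin N → ℝ) → Matrix (Fin N) (Fin N) ℝ)
    (z : (Fin N ⊕ Fin N) → ℝ) : Matrix (Fin N ⊕ Fin N) (Fin N ⊕ Fin N) ℝ :=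
  Matrix.fromBlocks (π₁ (Yc z)) (π₂ (Xc z)) (π₂ (Xc z)) (∑ s, Yc z s • pdMat s π₂ (Xc z))

variable {π₁ π₂ : (Fin N → ℝ) → Matrix (Fin N) (Fin N) ℝ} (z : (Fin N ⊕ Fin N) → ℝ)
  (i j k : Fin N)

@[simp] lemma semidirectTensor_inl_inl :
    semidirectTensor π₁ π₂ z (.inl i) (.inl j) = π₁ (Yc z) i j := rfl

@[simp] lemma semidirectTensor_inl_inr :
    semidirectTensor π₁ π₂ z (.inl i) (.inr j) = π₂ (Xc z) i j := rfl

@[simp] lemma semidirectTensor_inr_inl :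
    semidirectTensor π₁ π₂ z (.inr i) (.inl j) = π₂ (Xc z) i j := rfl

@[simp] lemma semidirectTensor_inr_inr :
    semidirectTensor π₁ π₂ z (.inr i) (.inr j) = ∑ m, Yc z m * pd m (fun x => π₂ x i j) (Xc z) := by
  simp [semidirectTensor, Matrix.sum_apply, pdMat]

lemma contDiff_semidirectTensor (h₁ : ∀ i j, ContDiff ℝ ∞ fun y => π₁ y i j)
    (h₂ : ∀ i j, ContDiff ℝ ∞ fun x => π₂ x i j) (a b : Fin N ⊕ Fin N) :
    ContDiff ℝ ∞ fun z => semidirectTensor π₁ π₂ z a b := by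
  rcases a with i | i <;> rcases b with j | j <;>
    simp only [semidirectTensor_inl_inl, semidirectTensor_inl_inr, semidirectTensor_inr_inl,
      semidirectTensor_inr_inr]
  · exact (h₁ i j).comp_Yc
  · exact (h₂ i j).comp_Xc
  · exact (h₂ i j).comp_Xc
  · refine ContDiff.sum fun m _ => ContDiff.mul ?_ ((h₂ i j).contDiff_pd (by simp) m).comp_Xc
    unfold Yc; fun_prop

lemma semidirectTensor_antisymm (anti₁ : ∀ y i j, π₁ y j i = -π₁ y i j)
    (anti₂ : ∀ x i j, π₂ x j i = -π₂ x i j) (a b : Fin N ⊕ Fin N) :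
    semidirectTensor π₁ π₂ z b a = -semidirectTensor π₁ π₂ z a b := by
  rcases a with i | i <;> rcases b with j | j <;>
    simp only [semidirectTensor_inl_inl, semidirectTensor_inl_inr, semidirectTensor_inr_inl,
      semidirectTensor_inr_inr]
  · exact anti₁ _ i j
  · exact anti₂ _ i j
  · exact anti₂ _ i j
  · have hji : (fun x => π₂ x j i) = fun x => -π₂ x i j := funext fun x => anti₂ x i j
    simp only [hji, pd_neg, mul_neg, Finset.sum_neg_distrib]

lemma jacobiator_semidirectTensor_inl_inl_inl (h₁ : ∀ i j, Differentiable ℝ fun y => π₁ y i j) :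
    jacobiator (semidirectTensor π₁ π₂) z (.inl i) (.inl j) (.inl k)
      = ∑ s, (π₂ (Xc z) s k * pd s (fun y => π₁ y i j) (Yc z)
        + π₂ (Xc z) s j * pd s (fun y => π₁ y k i) (Yc z)
        + π₂ (Xc z) s i * pd s (fun y => π₁ y j k) (Yc z)) := by
  simp only [jacobiator, Fintype.sum_sum_type, semidirectTensor_inl_inl, semidirectTensor_inr_inl,
    pd_inl_comp_Yc ((h₁ _ _).differentiableAt), pd_inr_comp_Yc ((h₁ _ _).differentiableAt),
    zero_mul, add_zero, Finset.sum_const_zero, zero_add]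
  exact Finset.sum_congr rfl fun _ _ => by ring

lemma jacobiator_semidirectTensor_inl_inl_inr (h₁ : ∀ i j, Differentiable ℝ fun y => π₁ y i j)
    (h₂ : ∀ i j, Differentiable ℝ fun x => π₂ x i j) :
    jacobiator (semidirectTensor π₁ π₂) z (.inl i) (.inl j) (.inr k)
      = ∑ s, ((∑ m, Yc z m * pd m (fun x => π₂ x s k) (Xc z)) * pd s (fun y => π₁ y i j) (Yc z)
        + π₁ (Yc z) s i * pd s (fun x => π₂ x j k) (Xc z)
        + π₁ (Yc z) s j * pd s (fun x => π₂ x k i) (Xc z)) := by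
  simp only [jacobiator, Fintype.sum_sum_type, semidirectTensor_inl_inl, semidirectTensor_inl_inr,
    semidirectTensor_inr_inl, semidirectTensor_inr_inr,
    pd_inl_comp_Yc ((h₁ _ _).differentiableAt), pd_inr_comp_Yc ((h₁ _ _).differentiableAt),
    pd_inl_comp_Xc ((h₂ _ _).differentiableAt), pd_inr_comp_Xc ((h₂ _ _).differentiableAt),
    zero_mul, add_zero, zero_add, ← Finset.sum_add_distrib]
  exact Finset.sum_congr rfl fun _ _ => by ring

lemma jacobiator_semidirectTensor_inl_inr_inr (h₂ : ∀ i j, ContDiff ℝ 2 fun x => π₂ x i j) :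
    jacobiator (semidirectTensor π₁ π₂) z (.inl i) (.inr j) (.inr k)
      = jacobiator π₂ (Xc z) i j k
        + ∑ s, ∑ m, Yc z s * π₁ (Yc z) m i
          * pd m (fun x => pd s (fun x' => π₂ x' j k) x) (Xc z) := by
  have hd (i j : Fin N) := ((h₂ i j).differentiable two_ne_zero).differentiableAt (x := Xc z)
  have hpd (m i j : Fin N) := ((h₂ i j).differentiable_pd m).differentiableAt (x := Xc z)
  have hmixed : ∑ s, (∑ m, Yc z m * pd s (fun x => pd m (fun x' => π₂ x' j k) x) (Xc z))
        * π₁ (Yc z) s i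
      = ∑ s, ∑ m, Yc z s * π₁ (Yc z) m i * pd m (fun x => pd s (fun x' => π₂ x' j k) x) (Xc z) := by
    rw [Finset.sum_comm]
    simp only [Finset.sum_mul]
    exact Finset.sum_congr rfl fun _ _ => Finset.sum_congr rfl fun _ _ => by ring
  simp only [jacobiator, Fintype.sum_sum_type, semidirectTensor_inl_inl, semidirectTensor_inl_inr,
    semidirectTensor_inr_inl, semidirectTensor_inr_inr,
    pd_inl_comp_Xc (hd _ _), pd_inr_comp_Xc (hd _ _),
    pd_inl_sum_Yc_mul_comp_Xc (hpd · _ _), pd_inr_sum_Yc_mul_comp_Xc (hpd · _ _),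
    zero_mul, add_zero, zero_add]
  rw [← hmixed]
  simp only [Finset.sum_add_distrib]
  ring

lemma jacobiator_semidirectTensor_inr_inr_inr (h₂ : ∀ i j, ContDiff ℝ 2 fun x => π₂ x i j) :
    jacobiator (semidirectTensor π₁ π₂) z (.inr i) (.inr j) (.inr k)
      = ∑ m, Yc z m * pd m (fun x => jacobiator π₂ x i j k) (Xc z) := by
  have hpd (m i j : Fin N) := ((h₂ i j).differentiable_pd m).differentiableAt (x := Xc z)
  simp only [pd_jacobiator h₂]
  simp only [jacobiator, Fintype.sum_sum_type, semidirectTensor_inl_inr, semidirectTensor_inr_inr,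
    pd_inl_sum_Yc_mul_comp_Xc (hpd · _ _), pd_inr_sum_Yc_mul_comp_Xc (hpd · _ _),
    Finset.mul_sum, Finset.sum_mul, ← Finset.sum_add_distrib]
  rw [Finset.sum_comm]
  exact Finset.sum_congr rfl fun _ _ => Finset.sum_congr rfl fun _ _ => by ring

end SemidirectTensor

theorem stmt15_general {N : ℕ}
    (π₁ π₂ : (Fin N → ℝ) → Matrix (Fin N) (Fin N) ℝ)
    (hπ₁ : IsPoissonTensor π₁) (hπ₂ : IsPoissonTensor π₂)
    (hi : ∀ (x y : Fin N → ℝ) (i j k : Fin N),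
      ∑ s, (π₂ x s k * pd s (fun y' => π₁ y' i j) y
        + π₂ x s j * pd s (fun y' => π₁ y' k i) y
        + π₂ x s i * pd s (fun y' => π₁ y' j k) y) = 0)
    (hii : ∀ (x y : Fin N → ℝ) (i j k : Fin N),
      ∑ s, ((∑ m, y m * pd m (fun x' => π₂ x' s k) x) * pd s (fun y' => π₁ y' i j) y
        + π₁ y s i * pd s (fun x' => π₂ x' j k) x
        + π₁ y s j * pd s (fun x' => π₂ x' k i) x) = 0)
    (hiii : ∀ (x y : Fin N → ℝ) (i j k : Fin N),
      ∑ s, ∑ m, y s * π₁ y m k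
        * pd m (fun x' => pd s (fun x'' => π₂ x'' i j) x') x = 0) :
    IsPoissonTensor (fun z : (Fin N ⊕ Fin N) → ℝ =>
      Matrix.fromBlocks
        (π₁ (Yc z))
        (π₂ (Xc z))
        (π₂ (Xc z))
        (∑ s, Yc z s • pdMat s π₂ (Xc z))) := by
  obtain ⟨smooth₁, anti₁, -⟩ := hπ₁
  obtain ⟨smooth₂, anti₂, jacobi₂⟩ : _ ∧ _ ∧ ∀ x i j k, jacobiator π₂ x i j k = 0 := hπ₂
  have hd₁ (i j : Fin N) := (smooth₁ i j).differentiable (by simp)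
  have hc₂ (i j : Fin N) : ContDiff ℝ 2 fun x => π₂ x i j :=
    (smooth₂ i j).of_le (WithTop.coe_le_coe.2 le_top)
  have hd₂ (i j : Fin N) := (hc₂ i j).differentiable two_ne_zero
  refine ⟨contDiff_semidirectTensor smooth₁ smooth₂,
    fun z => semidirectTensor_antisymm z anti₁ anti₂, fun z a b c => ?_⟩
  change jacobiator (semidirectTensor π₁ π₂) z a b c = 0
  rcases a with i | i <;> rcases b with j | j <;> rcases c with k | k
  · rw [jacobiator_semidirectTensor_inl_inl_inl z i j k hd₁, hi]
  · rw [jacobiator_semidirectTensor_inl_inl_inr z i j k hd₁ hd₂, hii]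
  · rw [jacobiator_rotate, jacobiator_semidirectTensor_inl_inl_inr z k i j hd₁ hd₂, hii]
  · rw [jacobiator_semidirectTensor_inl_inr_inr z i j k hc₂, jacobi₂, hiii, add_zero]
  · rw [← jacobiator_rotate, jacobiator_semidirectTensor_inl_inl_inr z j k i hd₁ hd₂, hii]
  · rw [← jacobiator_rotate, jacobiator_semidirectTensor_inl_inr_inr z j k i hc₂, jacobi₂, hiii,
      add_zero]
  · rw [jacobiator_rotate, jacobiator_semidirectTensor_inl_inr_inr z k i j hc₂, jacobi₂, hiii,
      add_zero]
  · rw [jacobiator_semidirectTensor_inr_inr_inr z i j k hc₂, funext (jacobi₂ · i j k)]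
    simp [pd]

/-- under conditions (i)–(iii), the semidirect-type tensor
`π₁ ⋉₁ π₂ = [[π₁(y), π₂(x)],[π₂(x), ∑_s (∂π₂/∂x_s)(x) y_s]]` is Poisson on `ℝ^{2N}`. -/
theorem stmt15 {N : ℕ} (hN : 1 ≤ N)
    (π₁ π₂ : (Fin N → ℝ) → Matrix (Fin N) (Fin N) ℝ)
    (hπ₁ : IsPoissonTensor π₁) (hπ₂ : IsPoissonTensor π₂)
    (hi : ∀ (x y : Fin N → ℝ) (i j k : Fin N),
      ∑ s, (π₂ x s k * pd s (fun y' => π₁ y' i j) y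
        + π₂ x s j * pd s (fun y' => π₁ y' k i) y
        + π₂ x s i * pd s (fun y' => π₁ y' j k) y) = 0)
    (hii : ∀ (x y : Fin N → ℝ) (i j k : Fin N),
      ∑ s, ((∑ m, y m * pd m (fun x' => π₂ x' s k) x) * pd s (fun y' => π₁ y' i j) y
        + π₁ y s i * pd s (fun x' => π₂ x' j k) x
        + π₁ y s j * pd s (fun x' => π₂ x' k i) x) = 0)
    (hiii : ∀ (x y : Fin N → ℝ) (i j k : Fin N),
      ∑ s, ∑ m, y s * π₁ y m k
        * pd m (fun x' => pd s (fun x'' => π₂ x'' i j) x') x = 0) :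
    IsPoissonTensor (fun z : (Fin N ⊕ Fin N) → ℝ =>
      Matrix.fromBlocks
        (π₁ (Yc z))
        (π₂ (Xc z))
        (π₂ (Xc z))
        (∑ s, Yc z s • pdMat s π₂ (Xc z))) :=
  stmt15_general π₁ π₂ hπ₁ hπ₂ hi hii hiii
end

section
/- Let π₂ be a constant Poisson tensor on ℝ^N (π₂(x) = A for all x, A a constant antisymmetric N×N real matrix) and let π₁ be a Poisson tensor on ℝ^N compatible with π₂. Let c be a Casimir function for π₂ (∑_{s=1}^N (∂c/∂x_s) A_{sj} = 0 for all j) and let c̃ : ℝ^N → ℝ be a smooth function such that ∑_{s=1}^N ( π_{1,js}(y) (∂c/∂x_s)(x) + A_{js} (∂c̃/∂y_s)(y) ) = 0 for all j and all x, y ∈ ℝ^N. Then the functions on ℝ^{2N} given by F₁(x,y) = c(y) and F₂(x,y) = c(x) + c̃(y) are Casimir functions for the Poisson tensor π₁ ⋉₁ π₂ on ℝ^{2N}, i.e. the tensor with blocks Π^{xx}(x,y) = π₁(y), Π^{xy} = Π^{yx} = A, Π^{yy} = 0. -/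
/-!
The gradient of `F₁` at `(x, y)` is `(0, ∇c(y))` and that of `F₂` is `(∇c(x), ∇c̃(y))`. For a
covector `(u, v)`, multiplying against the blocks `[[P, A], [A, 0]]` gives `(u P + v A, u A)`, and
antisymmetry of `P` and `A` turns the first block into `-(P u + A v)`. So `(u, v)` is annihilated
as soon as `u A = 0` and `P u + A v = 0`: for `F₁` this is the Casimir property of `c` for `A`,
and for `F₂` it is that property together with the defining equation of `c̃`.
-/

open scoped ContDiff

open Matrix

section Algebra

variable {n α : Type*} [Fintype n] [CommRing α]

lemma vecMul_eq_neg_mulVec {P : Matrix n n α} (hP : Pᵀ = -P) (u : n → α) :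
    u ᵥ* P = -(P *ᵥ u) := by
  rw [← vecMul_transpose, hP, vecMul_neg, neg_neg]

lemma sum_elim_vecMul_fromBlocks_eq_zero {P A : Matrix n n α} (hP : Pᵀ = -P) (hA : Aᵀ = -A)
    {u v : n → α} (hu : u ᵥ* A = 0) (huv : P *ᵥ u + A *ᵥ v = 0) :
    Sum.elim u v ᵥ* fromBlocks P A A 0 = 0 := by
  rw [vecMul_fromBlocks, Sum.elim_comp_inl, Sum.elim_comp_inr, vecMul_eq_neg_mulVec hP,
    vecMul_eq_neg_mulVec hA, ← neg_add, huv, hu, vecMul_zero]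
  simp

end Algebra

section Gradient

variable {ι : Type} [Fintype ι] [DecidableEq ι]

noncomputable def grad (f : (ι → ℝ) → ℝ) (x : ι → ℝ) : ι → ℝ := fun s => pd s f x

lemma isCasimir_iff_vecMul {π : (ι → ℝ) → Matrix ι ι ℝ} {c : (ι → ℝ) → ℝ} :
    IsCasimir π c ↔ ContDiff ℝ ∞ c ∧ ∀ x, grad c x ᵥ* π x = 0 := by
  simp only [IsCasimir, funext_iff, vecMul, dotProduct, grad, Pi.zero_apply]

lemma grad_add {f g : (ι → ℝ) → ℝ} {x : ι → ℝ} (hf : DifferentiableAt ℝ f x)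
    (hg : DifferentiableAt ℝ g x) :
    grad (fun y => f y + g y) x = grad f x + grad g x := by
  funext s
  simp only [grad, pd, fderiv_fun_add hf hg, _root_.add_apply, Pi.add_apply]

lemma pd_comp_continuousLinearMap {κ : Type} [Fintype κ] (L : (ι → ℝ) →L[ℝ] (κ → ℝ))
    {f : (κ → ℝ) → ℝ} {x : ι → ℝ} (hf : DifferentiableAt ℝ f (L x)) (s : ι) :
    pd s (fun y => f (L y)) x = fderiv ℝ f (L x) (L (Pi.single s 1)) := by
  rw [pd, show (fun y => f (L y)) = f ∘ L from rfl, fderiv_comp x hf L.differentiableAt,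
    ContinuousLinearMap.fderiv]
  rfl

end Gradient

section Blocks

variable {N : ℕ}

noncomputable def XcL (N : ℕ) : ((Fin N ⊕ Fin N) → ℝ) →L[ℝ] (Fin N → ℝ) :=
  ContinuousLinearMap.pi fun i => ContinuousLinearMap.proj (Sum.inl i)

noncomputable def YcL (N : ℕ) : ((Fin N ⊕ Fin N) → ℝ) →L[ℝ] (Fin N → ℝ) :=
  ContinuousLinearMap.pi fun i => ContinuousLinearMap.proj (Sum.inr i)

@[simp] lemma coe_XcL : ⇑(XcL N) = Xc := rfl

@[simp] lemma coe_YcL : ⇑(YcL N) = Yc := rfl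

@[simp] lemma Xc_single_inl (s : Fin N) (a : ℝ) :
    Xc (Pi.single (Sum.inl s) a) = Pi.single s a := by
  ext i; simp [Xc, Pi.single_apply]

@[simp] lemma Xc_single_inr (s : Fin N) (a : ℝ) :
    Xc (Pi.single (Sum.inr s) a) = 0 := by
  ext i; simp [Xc]

@[simp] lemma Yc_single_inl (s : Fin N) (a : ℝ) :
    Yc (Pi.single (Sum.inl s) a) = 0 := by
  ext i; simp [Yc]

@[simp] lemma Yc_single_inr (s : Fin N) (a : ℝ) :
    Yc (Pi.single (Sum.inr s) a) = Pi.single s a := by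
  ext i; simp [Yc, Pi.single_apply]

lemma grad_comp_Xc {f : (Fin N → ℝ) → ℝ} {z : (Fin N ⊕ Fin N) → ℝ}
    (hf : DifferentiableAt ℝ f (Xc z)) :
    grad (fun z => f (Xc z)) z = Sum.elim (grad f (Xc z)) (0 : Fin N → ℝ) := by
  funext t
  change pd t (fun z => f (XcL N z)) z = _
  rw [pd_comp_continuousLinearMap _ hf]
  rcases t with s | s <;> simp [grad, pd]

lemma grad_comp_Yc {f : (Fin N → ℝ) → ℝ} {z : (Fin N ⊕ Fin N) → ℝ}
    (hf : DifferentiableAt ℝ f (Yc z)) :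
    grad (fun z => f (Yc z)) z = Sum.elim (0 : Fin N → ℝ) (grad f (Yc z)) := by
  funext t
  change pd t (fun z => f (YcL N z)) z = _
  rw [pd_comp_continuousLinearMap _ hf]
  rcases t with s | s <;> simp [grad, pd]

end Blocks

theorem stmt18_general {N : ℕ}
    (A : Matrix (Fin N) (Fin N) ℝ) (hA : ∀ i j, A j i = - A i j)
    (π₁ : (Fin N → ℝ) → Matrix (Fin N) (Fin N) ℝ) (hπ₁ : IsPoissonTensor π₁)
    (c : (Fin N → ℝ) → ℝ) (hcsm : ContDiff ℝ ∞ c)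
    (hcas : ∀ x j, ∑ s, pd s c x * A s j = 0)
    (ct : (Fin N → ℝ) → ℝ) (hctsm : ContDiff ℝ ∞ ct)
    (hct : ∀ (x y : Fin N → ℝ) (j : Fin N),
      ∑ s, (π₁ y j s * pd s c x + A j s * pd s ct y) = 0) :
    IsCasimir (fun z : (Fin N ⊕ Fin N) → ℝ =>
        Matrix.fromBlocks (π₁ (Yc z)) A A 0)
      (fun z => c (Yc z)) ∧
    IsCasimir (fun z : (Fin N ⊕ Fin N) → ℝ =>
        Matrix.fromBlocks (π₁ (Yc z)) A A 0)
      (fun z => c (Xc z) + ct (Yc z)) := by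
  have hAt : Aᵀ = -A := Matrix.ext fun i j => hA i j
  have hπt (y : Fin N → ℝ) : (π₁ y)ᵀ = -π₁ y := Matrix.ext fun i j => hπ₁.2.1 y i j
  have hcasA (x : Fin N → ℝ) : grad c x ᵥ* A = 0 := funext (hcas x)
  have hctA (x y : Fin N → ℝ) : π₁ y *ᵥ grad c x + A *ᵥ grad ct y = 0 := by
    funext j
    simpa [mulVec, dotProduct, grad, Finset.sum_add_distrib] using hct x y j
  have hcd := hcsm.differentiable (by simp)
  have hctd := hctsm.differentiable (by simp)
  refine ⟨isCasimir_iff_vecMul.2 ⟨hcsm.comp (YcL N).contDiff, fun z => ?_⟩,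
    isCasimir_iff_vecMul.2 ⟨(hcsm.comp (XcL N).contDiff).add (hctsm.comp (YcL N).contDiff),
      fun z => ?_⟩⟩
  · rw [grad_comp_Yc (hcd _)]
    refine sum_elim_vecMul_fromBlocks_eq_zero (hπt _) hAt (zero_vecMul A) ?_
    rw [mulVec_zero, zero_add, ← neg_eq_zero, ← vecMul_eq_neg_mulVec hAt, hcasA]
  · have hcX : DifferentiableAt ℝ (fun z => c (Xc z)) z :=
      (hcd _).comp z (XcL N).differentiableAt
    have hctY : DifferentiableAt ℝ (fun z => ct (Yc z)) z :=
      (hctd _).comp z (YcL N).differentiableAt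
    rw [grad_add hcX hctY, grad_comp_Xc (hcd _), grad_comp_Yc (hctd _), ← Sum.elim_add_add,
      add_zero, zero_add]
    exact sum_elim_vecMul_fromBlocks_eq_zero (hπt _) hAt (hcasA _) (hctA _ _)

/-- Casimir functions `F₁(x,y) = c(y)` and `F₂(x,y) = c(x) + c̃(y)` for the
tensor `π₁ ⋉₁ π₂ = [[π₁(y), A],[A, 0]]`, where `π₂ = A` is constant. -/
theorem stmt18 {N : ℕ} (hN : 1 ≤ N)
    (A : Matrix (Fin N) (Fin N) ℝ) (hA : ∀ i j, A j i = - A i j)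
    (π₁ : (Fin N → ℝ) → Matrix (Fin N) (Fin N) ℝ) (hπ₁ : IsPoissonTensor π₁)
    (hcomp : IsPoissonTensor (fun x => π₁ x + A))
    (c : (Fin N → ℝ) → ℝ) (hcsm : ContDiff ℝ ∞ c)
    (hcas : ∀ x j, ∑ s, pd s c x * A s j = 0)
    (ct : (Fin N → ℝ) → ℝ) (hctsm : ContDiff ℝ ∞ ct)
    (hct : ∀ (x y : Fin N → ℝ) (j : Fin N),
      ∑ s, (π₁ y j s * pd s c x + A j s * pd s ct y) = 0) :
    IsCasimir (fun z : (Fin N ⊕ Fin N) → ℝ =>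
        Matrix.fromBlocks (π₁ (Yc z)) A A 0)
      (fun z => c (Yc z)) ∧
    IsCasimir (fun z : (Fin N ⊕ Fin N) → ℝ =>
        Matrix.fromBlocks (π₁ (Yc z)) A A 0)
      (fun z => c (Xc z) + ct (Yc z)) :=
  stmt18_general A hA π₁ hπ₁ c hcsm hcas ct hctsm hct
end
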